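/- Let H be a finite-dimensional real inner product space, let f : H → ℝ be convex with a nonempty set of global minimizers, and let ζ > 0 and G > 0. Let (x_k)_{k≥1} be generated by x_{k+1} = x_k − (ζ/k) · g_k/‖g_k‖, where each g_k is a nonzero subgradient of f at x_k with ‖g_k‖ ≤ G. Then (x_k) converges to a global minimizer of f. -/
import Mathlib


open RealInnerProductSpace Filter Topology

/-- Quasi-Fejér: if `a (k+1) ≤ a k + c k` for `k ≥ 1` with `c` summable and nonnegative,
and `a` nonnegative, then `a` converges. -/
private lemma quasiFejer_converges (a c : ℕ → ℝ) (hc : Summable c) (hc0 : ∀ k, 0 ≤ c k)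
    (ha0 : ∀ k, 0 ≤ a k) (hrec : ∀ k, 1 ≤ k → a (k + 1) ≤ a k + c k) :
    ∃ L, Tendsto a atTop (𝓝 L) := by
  have hanti : Antitone (fun n => a (n + 1) - ∑ j ∈ Finset.range (n + 1), c j) := by
    apply antitone_nat_of_succ_le
    intro n
    have h1 := hrec (n + 1) (by omega)
    have h2 : ∑ j ∈ Finset.range (n + 1 + 1), c j
        = (∑ j ∈ Finset.range (n + 1), c j) + c (n + 1) := Finset.sum_range_succ c (n + 1)
    show a (n + 1 + 1) - _ ≤ a (n + 1) - _
    linarith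
  have hbdd : BddBelow (Set.range (fun n => a (n + 1) - ∑ j ∈ Finset.range (n + 1), c j)) := by
    refine ⟨-(∑' j, c j), ?_⟩
    rintro _ ⟨n, rfl⟩
    have h1 : ∑ j ∈ Finset.range (n + 1), c j ≤ ∑' j, c j :=
      Summable.sum_le_tsum _ (fun i _ => hc0 i) hc
    have h2 := ha0 (n + 1)
    show -(∑' j, c j) ≤ a (n + 1) - _
    linarith
  have hb := tendsto_atTop_ciInf hanti hbdd
  have hStend : Tendsto (fun n => ∑ j ∈ Finset.range (n + 1), c j) atTop (𝓝 (∑' j, c j)) :=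
    hc.hasSum.tendsto_sum_nat.comp (tendsto_add_atTop_nat 1)
  have h2 := hb.add hStend
  simp only [sub_add_cancel] at h2
  exact ⟨_, (tendsto_add_atTop_iff_nat 1).mp h2⟩

/-- Theorem 3: in a finite-dimensional space, the subgradient method with the normalized
diminishing stepsize `η_k = (ζ/k)/‖g_k‖` (the dual-price update of the distributed
algorithm) converges to a global minimizer of the convex function `f`, provided the set of
global minimizers is nonempty and the subgradient norms are bounded by `G`. -/
theorem subgradient_method_converges_to_minimizer {H : Type*} [NormedAddCommGroup H]
    [InnerProductSpace ℝ H] [FiniteDimensional ℝ H]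
    (f : H → ℝ) (hf : ConvexOn ℝ Set.univ f)
    (hmin_exists : ∃ xstar : H, ∀ z : H, f xstar ≤ f z)
    (ζ G : ℝ) (hζ : 0 < ζ) (hG : 0 < G)
    (x g : ℕ → H)
    (hsubgrad : ∀ k ≥ 1, ∀ z : H, f (x k) + ⟪g k, z - x k⟫ ≤ f z)
    (hg_ne : ∀ k ≥ 1, g k ≠ 0)
    (hg_bdd : ∀ k ≥ 1, ‖g k‖ ≤ G)
    (hstep : ∀ k ≥ 1, x (k + 1) = x k - ((ζ / k) / ‖g k‖) • g k) :
    ∃ xlim : H, (∀ z : H, f xlim ≤ f z) ∧ Tendsto x atTop (𝓝 xlim) := by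
  obtain ⟨p, hp⟩ := hmin_exists
  -- the key one-step inequality, for any global minimizer q
  have key : ∀ q : H, (∀ z : H, f q ≤ f z) → ∀ k, 1 ≤ k →
      ‖x (k + 1) - q‖ ^ 2 ≤ ‖x k - q‖ ^ 2
        - 2 * (ζ / (G * k)) * (f (x k) - f q) + (ζ / k) ^ 2 := by
    intro q hq k hk
    have hk0 : (0 : ℝ) < k := by exact_mod_cast hk
    have hgn : 0 < ‖g k‖ := norm_pos_iff.mpr (hg_ne k hk)
    have hx : x (k + 1) - q = (x k - q) - ((ζ / (k : ℝ)) / ‖g k‖) • g k := by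
      rw [hstep k hk, sub_right_comm]
    have hηpos : 0 < (ζ / (k : ℝ)) / ‖g k‖ := div_pos (div_pos hζ hk0) hgn
    have hexp : ‖x (k + 1) - q‖ ^ 2 = ‖x k - q‖ ^ 2
        - 2 * (((ζ / (k : ℝ)) / ‖g k‖) * ⟪g k, x k - q⟫) + (ζ / k) ^ 2 := by
      rw [hx, norm_sub_sq_real]
      have h1 : ⟪x k - q, ((ζ / (k : ℝ)) / ‖g k‖) • g k⟫
          = ((ζ / (k : ℝ)) / ‖g k‖) * ⟪g k, x k - q⟫ := by
        rw [real_inner_smul_right, real_inner_comm]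
      have h2 : ‖((ζ / (k : ℝ)) / ‖g k‖) • g k‖ ^ 2 = (ζ / k) ^ 2 := by
        rw [norm_smul, Real.norm_eq_abs, abs_of_pos hηpos,
          div_mul_cancel₀ _ (ne_of_gt hgn)]
      rw [h1, h2]
    have hsub : f (x k) - f q ≤ ⟪g k, x k - q⟫ := by
      have h3 := hsubgrad k hk q
      have h4 : ⟪g k, q - x k⟫ = -⟪g k, x k - q⟫ := by
        rw [← neg_sub, inner_neg_right]
      linarith
    have hD0 : 0 ≤ f (x k) - f q := sub_nonneg.mpr (hq (x k))
    have hηge : ζ / (G * k) ≤ (ζ / (k : ℝ)) / ‖g k‖ := by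
      rw [div_div, div_le_div_iff₀ (by positivity) (by positivity)]
      have h5 := hg_bdd k hk
      nlinarith [mul_nonneg (mul_nonneg (sub_nonneg.mpr h5) hζ.le) hk0.le]
    have h6 : (ζ / (G * (k : ℝ))) * (f (x k) - f q)
        ≤ ((ζ / (k : ℝ)) / ‖g k‖) * ⟪g k, x k - q⟫ :=
      mul_le_mul hηge hsub hD0 hηpos.le
    linarith
  -- summable stepsize-squared sequence
  have hc_summable : Summable (fun j : ℕ => (ζ / (j : ℝ)) ^ 2) := by
    have h : Summable (fun j : ℕ => (1 : ℝ) / (j : ℝ) ^ 2) :=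
      Real.summable_one_div_nat_pow.mpr one_lt_two
    apply (h.mul_left (ζ ^ 2)).congr
    intro j
    rw [div_pow]
    ring
  have hc0 : ∀ j : ℕ, 0 ≤ (ζ / (j : ℝ)) ^ 2 := fun j => sq_nonneg _
  -- telescoped inequality for the base minimizer p
  have tele : ∀ k, 1 ≤ k →
      ‖x k - p‖ ^ 2 + ∑ j ∈ Finset.Ico 1 k, 2 * (ζ / (G * j)) * (f (x j) - f p)
        ≤ ‖x 1 - p‖ ^ 2 + ∑ j ∈ Finset.Ico 1 k, (ζ / (j : ℝ)) ^ 2 := by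
    intro k hk
    induction k, hk using Nat.le_induction with
    | base => simp
    | succ k hk ih =>
      rw [Finset.sum_Ico_succ_top hk, Finset.sum_Ico_succ_top hk]
      have h1 := key p hp k hk
      linarith
  set B : ℝ := ‖x 1 - p‖ ^ 2 + ∑' j : ℕ, (ζ / (j : ℝ)) ^ 2 with hB
  have hIcoB : ∀ k : ℕ, ∑ j ∈ Finset.Ico 1 k, (ζ / (j : ℝ)) ^ 2 ≤ ∑' j : ℕ, (ζ / (j : ℝ)) ^ 2 :=
    fun k => Summable.sum_le_tsum _ (fun i _ => hc0 i) hc_summable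
  have hterm0 : ∀ j : ℕ, 0 ≤ 2 * (ζ / (G * (j : ℝ))) * (f (x j) - f p) := by
    intro j
    apply mul_nonneg
    · positivity
    · exact sub_nonneg.mpr (hp (x j))
  have hbound : ∀ k, 1 ≤ k → ‖x k - p‖ ^ 2 ≤ B := by
    intro k hk
    have h1 := tele k hk
    have h2 : 0 ≤ ∑ j ∈ Finset.Ico 1 k, 2 * (ζ / (G * (j : ℝ))) * (f (x j) - f p) :=
      Finset.sum_nonneg fun j _ => hterm0 j
    have h3 := hIcoB k
    rw [hB]
    linarith
  have hB0 : 0 ≤ B := le_trans (sq_nonneg _) (hbound 1 le_rfl)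
  -- summability of the weighted optimality gaps
  set t : ℕ → ℝ := fun j => 2 * (ζ / (G * (j : ℝ))) * (f (x j) - f p) with ht_def
  have ht_eq : ∀ j : ℕ, t j = 2 * (ζ / (G * (j : ℝ))) * (f (x j) - f p) := fun j => rfl
  have ht_summable : Summable t := by
    apply summable_of_sum_range_le (fun j => (ht_eq j) ▸ hterm0 j)
    intro k
    rcases Nat.eq_zero_or_pos k with hk | hk
    · subst hk; simpa using hB0
    · rw [Finset.range_eq_Ico,
        ← Finset.sum_Ico_consecutive _ (Nat.zero_le 1) hk]
      have h1 := tele k hk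
      have h2 := hIcoB k
      have h3 : ∑ j ∈ Finset.Ico (0 : ℕ) 1, t j = 0 := by
        simp [ht_eq]
      have h3' : ∀ (s : Finset ℕ), ∑ j ∈ s, t j = ∑ j ∈ s, 2 * (ζ / (G * (j : ℝ))) * (f (x j) - f p) :=
        fun s => Finset.sum_congr rfl (fun j _ => ht_eq j)
      have h4 : 0 ≤ ‖x k - p‖ ^ 2 := sq_nonneg _
      rw [h3, h3', hB]
      linarith
  -- the optimality gap gets arbitrarily small, frequently
  have hfreq : ∀ ε : ℝ, 0 < ε → ∃ᶠ k in atTop, (1 ≤ k ∧ f (x k) - f p < ε) := by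
    intro ε hε
    by_contra hcon
    rw [Filter.not_frequently] at hcon
    obtain ⟨N, hN⟩ := Filter.eventually_atTop.mp hcon
    set M : ℕ := max N 1 with hM
    have hM1 : 1 ≤ M := le_max_right N 1
    have hge : ∀ k, M ≤ k → ε ≤ f (x k) - f p := by
      intro k hk
      have h1 := hN k (le_trans (le_max_left N 1) hk)
      push_neg at h1
      exact h1 (le_trans hM1 hk)
    have h1 : Summable (fun n : ℕ => t (n + M)) :=
      (summable_nat_add_iff M).mpr ht_summable
    have hMR : (1 : ℝ) ≤ (M : ℝ) := by exact_mod_cast hM1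
    have h2 : Summable (fun n : ℕ => (2 * ζ * ε / G) * (1 / ((n : ℝ) + M))) := by
      apply Summable.of_nonneg_of_le (fun n => by positivity) _ h1
      intro n
      have hd := hge (n + M) (Nat.le_add_left M n)
      have hpos : (0 : ℝ) < (n : ℝ) + M := by
        have : (0 : ℝ) ≤ (n : ℝ) := Nat.cast_nonneg n
        linarith
      have hcast : ((n + M : ℕ) : ℝ) = (n : ℝ) + M := by push_cast; ring
      rw [ht_eq, hcast]
      have he : (2 * ζ * ε / G) * (1 / ((n : ℝ) + M))
          = (2 * (ζ / (G * ((n : ℝ) + M)))) * ε := by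
        field_simp
      rw [he]
      apply mul_le_mul_of_nonneg_left hd
      positivity
    have hne : (2 * ζ * ε / G) ≠ 0 := by positivity
    have h3 : Summable (fun n : ℕ => 1 / ((n : ℝ) + M)) :=
      (summable_mul_left_iff hne).mp h2
    have h4 : Summable (fun n : ℕ => 1 / (n : ℝ)) := by
      apply (summable_nat_add_iff M).mp
      apply h3.congr
      intro n
      push_cast
      ring
    exact Real.not_summable_one_div_natCast h4
  have hfreq' : ∀ n : ℕ, ∃ᶠ k in atTop, (1 ≤ k ∧ f (x k) - f p < 1 / ((n : ℝ) + 1)) :=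
    fun n => hfreq _ (by positivity)
  obtain ⟨φ, hφmono, hφ⟩ := Filter.extraction_forall_of_frequently hfreq'
  -- extract a convergent subsequence in the closed ball
  have hball : ∀ n, x (φ n) ∈ Metric.closedBall p (Real.sqrt B) := by
    intro n
    rw [Metric.mem_closedBall, dist_eq_norm]
    have h1 := hbound (φ n) (hφ n).1
    nlinarith [Real.sq_sqrt hB0, Real.sqrt_nonneg B, norm_nonneg (x (φ n) - p)]
  obtain ⟨xbar, _, ψ, hψmono, hψtend⟩ :=
    (isCompact_closedBall p (Real.sqrt B)).tendsto_subseq hball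
  -- f is continuous (convex on finite-dimensional space)
  have hfc : Continuous f := by
    have h := hf.continuousOn isOpen_univ
    exact continuousOn_univ.mp h
  -- the function values along the subsequence converge to the minimum value
  have hfval : Tendsto (fun n => f (x (φ (ψ n)))) atTop (𝓝 (f p)) := by
    apply tendsto_of_tendsto_of_tendsto_of_le_of_le (g := fun _ : ℕ => f p)
      (h := fun n : ℕ => f p + 1 / ((n : ℝ) + 1))
    · exact tendsto_const_nhds
    · have h1 : Tendsto (fun n : ℕ => f p + 1 / ((n : ℝ) + 1)) atTop (𝓝 (f p + 0)) :=
        tendsto_const_nhds.add tendsto_one_div_add_atTop_nhds_zero_nat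
      simpa using h1
    · exact fun n => hp _
    · intro n
      have h2 := (hφ (ψ n)).2
      have h3 : 1 / ((ψ n : ℝ) + 1) ≤ 1 / ((n : ℝ) + 1) := by
        apply one_div_le_one_div_of_le
        · positivity
        · have := hψmono.le_apply (x := n)
          have : (n : ℝ) ≤ (ψ n : ℝ) := by exact_mod_cast hψmono.le_apply
          linarith
      linarith
  have hfxbar : f xbar = f p :=
    tendsto_nhds_unique ((hfc.tendsto xbar).comp hψtend) hfval
  have hxbar_min : ∀ z : H, f xbar ≤ f z := fun z => hfxbar ▸ hp z
  -- ‖x k - xbar‖² converges (quasi-Fejér)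
  have hrec' : ∀ k, 1 ≤ k → ‖x (k + 1) - xbar‖ ^ 2 ≤ ‖x k - xbar‖ ^ 2 + (ζ / (k : ℝ)) ^ 2 := by
    intro k hk
    have h1 := key xbar hxbar_min k hk
    have h2 : 0 ≤ 2 * (ζ / (G * (k : ℝ))) * (f (x k) - f xbar) := by
      apply mul_nonneg
      · positivity
      · exact sub_nonneg.mpr (hxbar_min (x k))
    linarith
  obtain ⟨L, hL⟩ := quasiFejer_converges (fun k => ‖x k - xbar‖ ^ 2) _
    hc_summable hc0 (fun k => sq_nonneg _) hrec'
  -- the subsequence converges to xbar, hence L = 0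
  have h5 : Tendsto (fun n => ‖x (φ (ψ n)) - xbar‖ ^ 2) atTop (𝓝 0) := by
    have h6 := ((hψtend.sub (tendsto_const_nhds (x := xbar))).norm.pow 2)
    simpa using h6
  have h6 : Tendsto (fun n => ‖x (φ (ψ n)) - xbar‖ ^ 2) atTop (𝓝 L) :=
    hL.comp ((hφmono.comp hψmono).tendsto_atTop)
  have hL0 : L = 0 := tendsto_nhds_unique h6 h5
  rw [hL0] at hL
  have h7 : Tendsto (fun k => ‖x k - xbar‖) atTop (𝓝 0) := by
    have h8 := (Real.continuous_sqrt.tendsto 0).comp hL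
    simp only [Real.sqrt_zero] at h8
    exact h8.congr (fun k => Real.sqrt_sq (norm_nonneg _))
  refine ⟨xbar, hxbar_min, ?_⟩
  rw [tendsto_iff_norm_sub_tendsto_zero]
  exact h7
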